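/- Let h be increasing with h(0)=0 and h° decreasing on R(0,c), with h satisfying stability and (h,h°) satisfying the Combinatorial Duality Property, and w = h + h° - h°(0). Then min{w(l) : l ∈ R(0,c)} ≥ h°(c) - h°(0) + min over increasing paths of the descent sum; in particular, combining with Theorem (eu-coincidence), eu(ℍ*(R(0,c),w)) = h°(0) - h°(c), i.e., -min w + Σ_q (-1)^q rank ℍ^q_red(R(0,c),w) = h°(0) - h°(c). -/
import Mathlib


open scoped Classical

/-- `E_I = Σ_{v ∈ I} E_v`. -/
def EI (s : ℕ) (I : Finset (Fin s)) : Fin s → ℤ := fun v => if v ∈ I then 1 else 0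

/-- The weight of the cube `(l, I)`: `w((l,I)) = max_{I' ⊆ I} w₀(l + E_{I'})`. -/
noncomputable def cubeW (s : ℕ) (w0 : (Fin s → ℤ) → ℤ)
    (l : Fin s → ℤ) (I : Finset (Fin s)) : ℤ :=
  (I.powerset.image (fun I' => w0 (l + EI s I'))).max'
    (Finset.Nonempty.image ⟨∅, Finset.empty_mem_powerset I⟩ _)

/-- The combinatorial Euler characteristic of `S_n ⊆ R(0,c)` (the union of the cubes of
weight `≤ n`), equal to `Σ_q (-1)^q rank H^q(S_n,ℤ)` for the finite cubical complex `S_n`. -/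
noncomputable def chiS (s : ℕ) (c : Fin s → ℤ) (w0 : (Fin s → ℤ) → ℤ) (n : ℤ) : ℤ :=
  ∑ l ∈ Finset.Icc (0 : Fin s → ℤ) c, ∑ I : Finset (Fin s),
    if l + EI s I ≤ c ∧ cubeW s w0 l I ≤ n then (-1 : ℤ) ^ I.card else 0

/-- `eu(ℍ*(R(0,c),w)) = -min w + Σ_q (-1)^q rank_ℤ ℍ^q_red(R(0,c),w)`, where
`Σ_q (-1)^q rank_ℤ ℍ^q_red = Σ_n (χ(S_n) - 1)` (all terms with `n ≥ max w` vanish). -/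
noncomputable def latticeEu (s : ℕ) (c : Fin s → ℤ) (hc : (0 : Fin s → ℤ) ≤ c)
    (w0 : (Fin s → ℤ) → ℤ) : ℤ :=
  let m := ((Finset.Icc (0 : Fin s → ℤ) c).image w0).min'
    (Finset.Nonempty.image (Finset.nonempty_Icc.mpr hc) w0)
  let M := ((Finset.Icc (0 : Fin s → ℤ) c).image w0).max'
    (Finset.Nonempty.image (Finset.nonempty_Icc.mpr hc) w0)
  (-m) + ∑ n ∈ Finset.Icc m M, (chiS s c w0 n - 1)

/-! ### Auxiliary lemmas on `EI` -/

lemma EI_empty (s : ℕ) : EI s ∅ = 0 := by ext v; simp [EI]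

lemma EI_nonneg (s : ℕ) (I : Finset (Fin s)) : (0 : Fin s → ℤ) ≤ EI s I := by
  intro v; simp only [EI, Pi.zero_apply]; split <;> norm_num

lemma EI_mono (s : ℕ) {I J : Finset (Fin s)} (hIJ : I ⊆ J) : EI s I ≤ EI s J := by
  intro v; simp only [EI]
  by_cases hv : v ∈ I
  · simp [hv, hIJ hv]
  · simp only [if_neg hv]; split <;> norm_num

lemma EI_insert (s : ℕ) (v : Fin s) (I : Finset (Fin s)) (hv : v ∉ I) :
    EI s (insert v I) = EI s I + Pi.single v 1 := by
  ext u
  simp only [EI, Finset.mem_insert, Pi.add_apply, Pi.single_apply]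
  by_cases huv : u = v
  · subst huv; simp [hv]
  · simp [huv, Ne.symm]

lemma EI_union_sdiff (s : ℕ) {I J : Finset (Fin s)} (hIJ : I ⊆ J) :
    EI s I + EI s (J \ I) = EI s J := by
  ext u
  simp only [EI, Pi.add_apply, Finset.mem_sdiff]
  by_cases hI : u ∈ I
  · simp [hI, hIJ hI]
  · by_cases hJ : u ∈ J <;> simp [hI, hJ]

lemma single_le_EI (s : ℕ) {v : Fin s} {I : Finset (Fin s)} (hv : v ∈ I) :
    (Pi.single v 1 : Fin s → ℤ) ≤ EI s I := by
  intro u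
  simp only [Pi.single_apply, EI]
  by_cases huv : u = v
  · subst huv; simp [hv]
  · simp only [if_neg huv]; split <;> norm_num

/-- inner alternating sum -/
lemma alt_sum_subsets (s : ℕ) (J : Finset (Fin s)) :
    (∑ I : Finset (Fin s), if I ⊆ J then ((-1 : ℤ) ^ I.card) else 0)
      = if J = ∅ then 1 else 0 := by
  rw [← Finset.sum_filter]
  have : Finset.univ.filter (fun I : Finset (Fin s) => I ⊆ J) = J.powerset := by
    ext I; simp [Finset.mem_powerset]
  rw [this, Finset.sum_powerset_neg_one_pow_card]

section Monotone

variable {s : ℕ} {c : Fin s → ℤ} {h hcirc : (Fin s → ℤ) → ℤ}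

lemma h_mono (hinc : ∀ (l : Fin s → ℤ) (v : Fin s), 0 ≤ l → l + Pi.single v 1 ≤ c →
      h l ≤ h (l + Pi.single v 1)) :
    ∀ (I : Finset (Fin s)) (l : Fin s → ℤ), 0 ≤ l → l + EI s I ≤ c →
      h l ≤ h (l + EI s I) := by
  intro I
  induction I using Finset.cons_induction with
  | empty => intro l _ _; simp [EI_empty]
  | cons v J hv ih =>
    intro l hl hlc
    have hEJ : EI s (Finset.cons v J hv) = EI s J + Pi.single v 1 := by
      rw [Finset.cons_eq_insert]; exact EI_insert s v J hv
    have hle : l + EI s J ≤ c := by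
      calc l + EI s J ≤ l + EI s (Finset.cons v J hv) := by
            gcongr; exact EI_mono s (Finset.subset_cons hv)
        _ ≤ c := hlc
    have h1 := ih l hl hle
    have h2 := hinc (l + EI s J) v (le_trans hl (by simpa using EI_nonneg s J))
      (by rw [add_assoc, ← hEJ]; exact hlc)
    rw [hEJ, ← add_assoc]
    calc h l ≤ h (l + EI s J) := h1
      _ ≤ _ := h2

lemma hcirc_anti (hdec : ∀ (l : Fin s → ℤ) (v : Fin s), 0 ≤ l → l + Pi.single v 1 ≤ c →
      hcirc (l + Pi.single v 1) ≤ hcirc l) :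
    ∀ (I : Finset (Fin s)) (l : Fin s → ℤ), 0 ≤ l → l + EI s I ≤ c →
      hcirc (l + EI s I) ≤ hcirc l := by
  intro I
  induction I using Finset.cons_induction with
  | empty => intro l _ _; simp [EI_empty]
  | cons v J hv ih =>
    intro l hl hlc
    have hEJ : EI s (Finset.cons v J hv) = EI s J + Pi.single v 1 := by
      rw [Finset.cons_eq_insert]; exact EI_insert s v J hv
    have hle : l + EI s J ≤ c := by
      calc l + EI s J ≤ l + EI s (Finset.cons v J hv) := by
            gcongr; exact EI_mono s (Finset.subset_cons hv)
        _ ≤ c := hlc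
    have h2 := hdec (l + EI s J) v (le_trans hl (by simpa using EI_nonneg s J))
      (by rw [add_assoc, ← hEJ]; exact hlc)
    rw [hEJ, ← add_assoc]
    exact le_trans h2 (ih l hl hle)

lemma h_flat (hstab : ∀ (l : Fin s → ℤ) (v : Fin s) (lbar : Fin s → ℤ),
      0 ≤ l → l + Pi.single v 1 ≤ c → 0 ≤ lbar → lbar v = 0 →
      l + lbar + Pi.single v 1 ≤ c →
      h l = h (l + Pi.single v 1) →
      h (l + lbar) = h (l + lbar + Pi.single v 1)) :
    ∀ (I : Finset (Fin s)) (l : Fin s → ℤ), 0 ≤ l → l + EI s I ≤ c →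
      (∀ v ∈ I, h (l + Pi.single v 1) = h l) → h (l + EI s I) = h l := by
  intro I
  induction I using Finset.cons_induction with
  | empty => intro l _ _ _; simp [EI_empty]
  | cons v J hv ih =>
    intro l hl hlc hf
    have hEJ : EI s (Finset.cons v J hv) = EI s J + Pi.single v 1 := by
      rw [Finset.cons_eq_insert]; exact EI_insert s v J hv
    have hJsub : J ⊆ Finset.cons v J hv := Finset.subset_cons hv
    have hle : l + EI s J ≤ c := by
      calc l + EI s J ≤ l + EI s (Finset.cons v J hv) := by
            gcongr; exact EI_mono s hJsub
        _ ≤ c := hlc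
    have hIH : h (l + EI s J) = h l := ih l hl hle (fun u hu => hf u (hJsub hu))
    have hsv : l + Pi.single v 1 ≤ c := by
      calc l + Pi.single v 1 ≤ l + EI s (Finset.cons v J hv) := by
            gcongr; exact single_le_EI s (Finset.mem_cons_self v J)
        _ ≤ c := hlc
    have hJv : (EI s J) v = 0 := by simp [EI, hv]
    have := hstab l v (EI s J) hl hsv (EI_nonneg s J) hJv
      (by rw [show l + EI s J + Pi.single v 1 = l + EI s (Finset.cons v J hv) from by
        rw [hEJ]; ring]; exact hlc) (hf v (Finset.mem_cons_self v J)).symm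
    rw [hEJ, ← add_assoc, ← this, hIH]

lemma attain
    (hinc : ∀ (l : Fin s → ℤ) (v : Fin s), 0 ≤ l → l + Pi.single v 1 ≤ c →
      h l ≤ h (l + Pi.single v 1))
    (hstab : ∀ (l : Fin s → ℤ) (v : Fin s) (lbar : Fin s → ℤ),
      0 ≤ l → l + Pi.single v 1 ≤ c → 0 ≤ lbar → lbar v = 0 →
      l + lbar + Pi.single v 1 ≤ c →
      h l = h (l + Pi.single v 1) →
      h (l + lbar) = h (l + lbar + Pi.single v 1))
    (hCDP : ∀ (l : Fin s → ℤ) (v : Fin s), 0 ≤ l → l + Pi.single v 1 ≤ c →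
      h (l + Pi.single v 1) - h l = 0 ∨ hcirc l - hcirc (l + Pi.single v 1) = 0) :
    ∀ (I : Finset (Fin s)) (l : Fin s → ℤ), 0 ≤ l → l + EI s I ≤ c →
      ∃ I' ⊆ I, h (l + EI s I') = h (l + EI s I) ∧ hcirc (l + EI s I') = hcirc l := by
  intro I
  induction I using Finset.strongInduction with
  | _ I ih =>
    intro l hl hlc
    by_cases hex : ∃ v ∈ I, h l < h (l + Pi.single v 1)
    · obtain ⟨v, hvI, hlt⟩ := hex
      have hsv : l + Pi.single v 1 ≤ c := by
        calc l + Pi.single v 1 ≤ l + EI s I := by gcongr; exact single_le_EI s hvI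
          _ ≤ c := hlc
      have hcd : hcirc l = hcirc (l + Pi.single v 1) := by
        rcases hCDP l v hl hsv with h1 | h1
        · omega
        · omega
      have hl' : (0 : Fin s → ℤ) ≤ l + Pi.single v 1 := by
        calc (0 : Fin s → ℤ) ≤ l := hl
          _ ≤ l + Pi.single v 1 := by
              intro u; simp only [Pi.add_apply, Pi.single_apply]
              split <;> omega
      have hEe : EI s I = EI s (I.erase v) + Pi.single v 1 := by
        have := EI_insert s v (I.erase v) (Finset.notMem_erase v I)
        rw [Finset.insert_erase hvI] at this; exact this
      have hrec := ih (I.erase v) (Finset.erase_ssubset hvI) (l + Pi.single v 1) hl'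
        (by rw [add_assoc, add_comm (Pi.single v 1), ← hEe]; exact hlc)
      obtain ⟨I'', hsub, hh, hhc⟩ := hrec
      refine ⟨insert v I'', ?_, ?_, ?_⟩
      · intro u hu
        rcases Finset.mem_insert.mp hu with rfl | hu
        · exact hvI
        · exact Finset.erase_subset v I (hsub hu)
      · have hvI'' : v ∉ I'' := fun hmem => Finset.notMem_erase v I (hsub hmem)
        rw [EI_insert s v I'' hvI'']
        have e1 : l + (EI s I'' + Pi.single v 1) = l + Pi.single v 1 + EI s I'' := by ring
        have e2 : l + Pi.single v 1 + EI s (I.erase v) = l + EI s I := by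
          rw [hEe]; ring
        rw [e1, hh, e2]
      · have hvI'' : v ∉ I'' := fun hmem => Finset.notMem_erase v I (hsub hmem)
        rw [EI_insert s v I'' hvI'']
        have e1 : l + (EI s I'' + Pi.single v 1) = l + Pi.single v 1 + EI s I'' := by ring
        rw [e1, hhc, hcd]
    · push_neg at hex
      refine ⟨∅, Finset.empty_subset I, ?_, by simp [EI_empty]⟩
      have : ∀ v ∈ I, h (l + Pi.single v 1) = h l := by
        intro v hv
        have hsv : l + Pi.single v 1 ≤ c := by
          calc l + Pi.single v 1 ≤ l + EI s I := by gcongr; exact single_le_EI s hv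
            _ ≤ c := hlc
        exact le_antisymm (hex v hv) (hinc l v hl hsv)
      rw [EI_empty]; simp only [add_zero]
      exact (h_flat hstab I l hl hlc this).symm

lemma cubeW_eq
    (hinc : ∀ (l : Fin s → ℤ) (v : Fin s), 0 ≤ l → l + Pi.single v 1 ≤ c →
      h l ≤ h (l + Pi.single v 1))
    (hdec : ∀ (l : Fin s → ℤ) (v : Fin s), 0 ≤ l → l + Pi.single v 1 ≤ c →
      hcirc (l + Pi.single v 1) ≤ hcirc l)
    (hstab : ∀ (l : Fin s → ℤ) (v : Fin s) (lbar : Fin s → ℤ),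
      0 ≤ l → l + Pi.single v 1 ≤ c → 0 ≤ lbar → lbar v = 0 →
      l + lbar + Pi.single v 1 ≤ c →
      h l = h (l + Pi.single v 1) →
      h (l + lbar) = h (l + lbar + Pi.single v 1))
    (hCDP : ∀ (l : Fin s → ℤ) (v : Fin s), 0 ≤ l → l + Pi.single v 1 ≤ c →
      h (l + Pi.single v 1) - h l = 0 ∨ hcirc l - hcirc (l + Pi.single v 1) = 0)
    (w0 : (Fin s → ℤ) → ℤ) (hw0 : ∀ l, w0 l = h l + hcirc l - hcirc 0)
    (l : Fin s → ℤ) (I : Finset (Fin s)) (hl : 0 ≤ l) (hlc : l + EI s I ≤ c) :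
    cubeW s w0 l I = h (l + EI s I) + hcirc l - hcirc 0 := by
  apply le_antisymm
  · apply Finset.max'_le
    intro y hy
    obtain ⟨I', hI', rfl⟩ := Finset.mem_image.mp hy
    rw [Finset.mem_powerset] at hI'
    rw [hw0]
    have hEsplit : l + EI s I' + EI s (I \ I') = l + EI s I := by
      rw [add_assoc, EI_union_sdiff s hI']
    have h0I' : (0 : Fin s → ℤ) ≤ l + EI s I' := le_trans hl (by
      simpa using add_le_add_left (EI_nonneg s I') l)
    have hI'c : l + EI s I' ≤ c := le_trans (by
      rw [← hEsplit]; simpa using add_le_add_left (EI_nonneg s (I \ I')) (l + EI s I')) hlc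
    have h1 : h (l + EI s I') ≤ h (l + EI s I) := by
      rw [← hEsplit]
      exact h_mono hinc (I \ I') (l + EI s I') h0I' (by rw [hEsplit]; exact hlc)
    have h2 : hcirc (l + EI s I') ≤ hcirc l := hcirc_anti hdec I' l hl hI'c
    omega
  · obtain ⟨I', hI', hh, hhc⟩ := attain hinc hstab hCDP I l hl hlc
    have hmem : w0 (l + EI s I') ∈ I.powerset.image (fun I' => w0 (l + EI s I')) :=
      Finset.mem_image_of_mem _ (Finset.mem_powerset.mpr hI')
    have heq : h (l + EI s I) + hcirc l - hcirc 0 = w0 (l + EI s I') := by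
      rw [hw0, hh, hhc]
    rw [heq]
    exact Finset.le_max' _ _ hmem

lemma cubeW_bounds (w0 : (Fin s → ℤ) → ℤ)
    (l : Fin s → ℤ) (I : Finset (Fin s)) (hl : 0 ≤ l) (hlc : l + EI s I ≤ c)
    {m M : ℤ} (hm : ∀ x ∈ Finset.Icc (0 : Fin s → ℤ) c, m ≤ w0 x)
    (hM : ∀ x ∈ Finset.Icc (0 : Fin s → ℤ) c, w0 x ≤ M) :
    m ≤ cubeW s w0 l I ∧ cubeW s w0 l I ≤ M := by
  have hmemK : ∀ I' ∈ I.powerset, l + EI s I' ∈ Finset.Icc (0 : Fin s → ℤ) c := by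
    intro I' hI'
    rw [Finset.mem_powerset] at hI'
    rw [Finset.mem_Icc]
    constructor
    · exact le_trans hl (by simpa using add_le_add_left (EI_nonneg s I') l)
    · exact le_trans (by simpa using add_le_add_left (EI_mono s hI') l) hlc
  constructor
  · have hin : w0 (l + EI s ∅) ∈ I.powerset.image (fun I' => w0 (l + EI s I')) :=
      Finset.mem_image_of_mem _ (Finset.empty_mem_powerset I)
    exact le_trans (hm (l + EI s ∅) (hmemK ∅ (Finset.empty_mem_powerset I)))
      (Finset.le_max' _ _ hin)
  · apply Finset.max'_le
    intro y hy
    obtain ⟨I', hI', rfl⟩ := Finset.mem_image.mp hy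
    exact hM _ (hmemK I' hI')

lemma inner_alt (l : Fin s → ℤ) (hl2 : l ≤ c) :
    (∑ I : Finset (Fin s), if l + EI s I ≤ c then ((-1 : ℤ) ^ I.card) else 0)
      = if l = c then 1 else 0 := by
  set J := Finset.univ.filter (fun v => l v + 1 ≤ c v) with hJ
  have hiff : ∀ I : Finset (Fin s), (l + EI s I ≤ c) ↔ I ⊆ J := by
    intro I
    constructor
    · intro hle v hv
      have := hle v
      simp only [Pi.add_apply, EI, if_pos hv] at this
      simp only [hJ, Finset.mem_filter, Finset.mem_univ, true_and]
      omega
    · intro hsub v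
      by_cases hv : v ∈ I
      · have := hsub hv
        simp only [hJ, Finset.mem_filter, Finset.mem_univ, true_and] at this
        simp only [Pi.add_apply, EI, if_pos hv]
        omega
      · simp only [Pi.add_apply, EI, if_neg hv]
        have h1 : l v ≤ c v := hl2 v
        omega
  have step1 : (∑ I : Finset (Fin s), if l + EI s I ≤ c then ((-1 : ℤ) ^ I.card) else 0)
      = ∑ I : Finset (Fin s), if I ⊆ J then ((-1 : ℤ) ^ I.card) else 0 :=
    Finset.sum_congr rfl (fun I _ => if_congr (hiff I) rfl rfl)
  rw [step1, alt_sum_subsets]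
  have hJe : (J = ∅) ↔ l = c := by
    simp only [hJ, Finset.eq_empty_iff_forall_notMem, Finset.mem_filter, Finset.mem_univ,
      true_and, not_le]
    constructor
    · intro h'
      funext v
      have h1 : l v ≤ c v := hl2 v
      have h2 := h' v
      omega
    · intro h' v
      subst h'
      omega
  exact if_congr hJe rfl rfl

lemma inner_alt2 (m : Fin s → ℤ) (hm : 0 ≤ m) :
    (∑ I : Finset (Fin s), if EI s I ≤ m then ((-1 : ℤ) ^ I.card) else 0)
      = if m = 0 then 1 else 0 := by
  set J := Finset.univ.filter (fun v => 1 ≤ m v) with hJ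
  have hiff : ∀ I : Finset (Fin s), (EI s I ≤ m) ↔ I ⊆ J := by
    intro I
    constructor
    · intro hle v hv
      have := hle v
      simp only [EI, if_pos hv] at this
      simp only [hJ, Finset.mem_filter, Finset.mem_univ, true_and]
      omega
    · intro hsub v
      by_cases hv : v ∈ I
      · have := hsub hv
        simp only [hJ, Finset.mem_filter, Finset.mem_univ, true_and] at this
        simp only [EI, if_pos hv]
        omega
      · simp only [EI, if_neg hv]
        exact hm v
  have step1 : (∑ I : Finset (Fin s), if EI s I ≤ m then ((-1 : ℤ) ^ I.card) else 0)
      = ∑ I : Finset (Fin s), if I ⊆ J then ((-1 : ℤ) ^ I.card) else 0 :=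
    Finset.sum_congr rfl (fun I _ => if_congr (hiff I) rfl rfl)
  rw [step1, alt_sum_subsets]
  have hJe : (J = ∅) ↔ m = 0 := by
    simp only [hJ, Finset.eq_empty_iff_forall_notMem, Finset.mem_filter, Finset.mem_univ,
      true_and, not_le]
    constructor
    · intro h'
      funext v
      have h1 : (0:ℤ) ≤ m v := hm v
      have h2 := h' v
      simp only [Pi.zero_apply]
      omega
    · intro h' v
      subst h'
      simp only [Pi.zero_apply]
      omega
  exact if_congr hJe rfl rfl

/-- reindexing `(l, I) ↦ (l + E_I, I)` -/
lemma reindex (g : (Fin s → ℤ) → ℤ) :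
    (∑ l ∈ Finset.Icc (0 : Fin s → ℤ) c, ∑ I : Finset (Fin s),
      if l + EI s I ≤ c then ((-1 : ℤ) ^ I.card) * g (l + EI s I) else 0)
    = ∑ m ∈ Finset.Icc (0 : Fin s → ℤ) c, ∑ I : Finset (Fin s),
      if EI s I ≤ m then ((-1 : ℤ) ^ I.card) * g m else 0 := by
  rw [← Finset.sum_product', ← Finset.sum_product']
  rw [← Finset.sum_filter, ← Finset.sum_filter]
  refine Finset.sum_nbij' (fun p => (p.1 + EI s p.2, p.2)) (fun q => (q.1 - EI s q.2, q.2))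
    ?_ ?_ ?_ ?_ ?_
  · rintro ⟨l, I⟩ hp
    simp only [Finset.mem_filter, Finset.mem_product, Finset.mem_Icc, Finset.mem_univ,
      and_true] at hp ⊢
    obtain ⟨⟨h0, hc2⟩, hq⟩ := hp
    refine ⟨⟨le_trans h0 ?_, hq⟩, ?_⟩
    · intro v
      have h1 : (0:ℤ) ≤ EI s I v := EI_nonneg s I v
      have h2 : (0:ℤ) ≤ l v := h0 v
      simp only [Pi.add_apply]
      omega
    · intro v
      have h2 : (0:ℤ) ≤ l v := h0 v
      simp only [Pi.add_apply]
      omega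
  · rintro ⟨m, I⟩ hq
    simp only [Finset.mem_filter, Finset.mem_product, Finset.mem_Icc, Finset.mem_univ,
      and_true] at hq ⊢
    obtain ⟨⟨h0, hc2⟩, hE⟩ := hq
    have hsub : m - EI s I + EI s I = m := by ring
    refine ⟨⟨?_, ?_⟩, ?_⟩
    · intro v
      have h1 : EI s I v ≤ m v := hE v
      simp only [Pi.sub_apply, Pi.zero_apply]
      omega
    · intro v
      have h1 : (0:ℤ) ≤ EI s I v := EI_nonneg s I v
      have h2 : m v ≤ c v := hc2 v
      simp only [Pi.sub_apply]
      omega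
    · rw [hsub]; exact hc2
  · rintro ⟨l, I⟩ _
    simp only [Prod.mk.injEq]
    constructor
    · ring
    · trivial
  · rintro ⟨m, I⟩ _
    simp only [Prod.mk.injEq]
    constructor
    · ring
    · trivial
  · rintro ⟨l, I⟩ _
    rfl

end Monotone

/-- Let `h` be increasing with `h 0 = 0` and `h°` decreasing on `R(0,c)`, with `h`
satisfying stability and `(h,h°)` the Combinatorial Duality Property, and
`w = h + h° - h°(0)`.  Then the `eu`-coincidence holds:
`eu(ℍ*(R(0,c),w)) = h°(0) - h°(c)`, i.e.
`-min w + Σ_q (-1)^q rank ℍ^q_red(R(0,c),w) = h°(0) - h°(c)`. -/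
theorem lattice_eu_coincidence (s : ℕ) (c : Fin s → ℤ)
    (hc : (fun _ => (1 : ℤ)) ≤ c) (hc0 : (0 : Fin s → ℤ) ≤ c)
    (h hcirc : (Fin s → ℤ) → ℤ)
    (hh0 : h 0 = 0)
    (hinc : ∀ (l : Fin s → ℤ) (v : Fin s), 0 ≤ l → l + Pi.single v 1 ≤ c →
      h l ≤ h (l + Pi.single v 1))
    (hdec : ∀ (l : Fin s → ℤ) (v : Fin s), 0 ≤ l → l + Pi.single v 1 ≤ c →
      hcirc (l + Pi.single v 1) ≤ hcirc l)
    (hstab : ∀ (l : Fin s → ℤ) (v : Fin s) (lbar : Fin s → ℤ),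
      0 ≤ l → l + Pi.single v 1 ≤ c → 0 ≤ lbar → lbar v = 0 →
      l + lbar + Pi.single v 1 ≤ c →
      h l = h (l + Pi.single v 1) →
      h (l + lbar) = h (l + lbar + Pi.single v 1))
    (hCDP : ∀ (l : Fin s → ℤ) (v : Fin s), 0 ≤ l → l + Pi.single v 1 ≤ c →
      h (l + Pi.single v 1) - h l = 0 ∨ hcirc l - hcirc (l + Pi.single v 1) = 0)
    (w0 : (Fin s → ℤ) → ℤ) (hw0 : ∀ l, w0 l = h l + hcirc l - hcirc 0) :
    latticeEu s c hc0 w0 = hcirc 0 - hcirc c := by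
  classical
  have hne : (Finset.Icc (0 : Fin s → ℤ) c).Nonempty := Finset.nonempty_Icc.mpr hc0
  set K := Finset.Icc (0 : Fin s → ℤ) c with hK
  set m := (K.image w0).min' (Finset.Nonempty.image hne w0) with hmdef
  set M := (K.image w0).max' (Finset.Nonempty.image hne w0) with hMdef
  have hEu : latticeEu s c hc0 w0 = -m + ∑ n ∈ Finset.Icc m M, (chiS s c w0 n - 1) := rfl
  have hm : ∀ x ∈ K, m ≤ w0 x := fun x hx =>
    Finset.min'_le _ _ (Finset.mem_image_of_mem w0 hx)
  have hM : ∀ x ∈ K, w0 x ≤ M := fun x hx =>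
    Finset.le_max' _ _ (Finset.mem_image_of_mem w0 hx)
  have hmM : m ≤ M := by
    obtain ⟨x, hx⟩ := hne
    exact le_trans (hm x hx) (hM x hx)
  -- the cube weight formula
  have key : ∀ l ∈ K, ∀ I : Finset (Fin s), l + EI s I ≤ c →
      cubeW s w0 l I = h (l + EI s I) + hcirc l - hcirc 0 := by
    intro l hl I hlc
    rw [hK, Finset.mem_Icc] at hl
    exact cubeW_eq hinc hdec hstab hCDP w0 hw0 l I hl.1 hlc
  have keyb : ∀ l ∈ K, ∀ I : Finset (Fin s), l + EI s I ≤ c →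
      m ≤ cubeW s w0 l I ∧ cubeW s w0 l I ≤ M := by
    intro l hl I hlc
    rw [hK, Finset.mem_Icc] at hl
    exact cubeW_bounds w0 l I hl.1 hlc hm hM
  -- Step A: summing `chiS` over `n ∈ [m, M]`
  have stepA : ∑ n ∈ Finset.Icc m M, chiS s c w0 n
      = ∑ l ∈ K, ∑ I : Finset (Fin s),
          (if l + EI s I ≤ c then ((-1 : ℤ) ^ I.card) * (M + 1 - cubeW s w0 l I) else 0) := by
    unfold chiS
    rw [Finset.sum_comm]
    refine Finset.sum_congr rfl ?_
    intro l hl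
    rw [Finset.sum_comm]
    refine Finset.sum_congr rfl ?_
    intro I _
    by_cases hQ : l + EI s I ≤ c
    · obtain ⟨hW1, hW2⟩ := keyb l hl I hQ
      have hfil : (Finset.Icc m M).filter (fun n => cubeW s w0 l I ≤ n)
          = Finset.Icc (cubeW s w0 l I) M := by
        ext n
        simp only [Finset.mem_filter, Finset.mem_Icc]
        constructor
        · rintro ⟨⟨_, h2⟩, h3⟩; exact ⟨h3, h2⟩
        · rintro ⟨h1, h2⟩; exact ⟨⟨le_trans hW1 h1, h2⟩, h1⟩
      have e1 : (∑ n ∈ Finset.Icc m M,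
          if l + EI s I ≤ c ∧ cubeW s w0 l I ≤ n then ((-1 : ℤ) ^ I.card) else 0)
          = ∑ n ∈ (Finset.Icc m M).filter (fun n => cubeW s w0 l I ≤ n), ((-1 : ℤ) ^ I.card) := by
        rw [Finset.sum_filter]
        exact Finset.sum_congr rfl (fun n _ => by
          simp only [hQ, true_and])
      rw [e1, hfil, Finset.sum_const, if_pos hQ, Int.card_Icc, nsmul_eq_mul,
        Int.toNat_of_nonneg (by omega)]
      ring
    · simp only [hQ, false_and, if_false, if_neg hQ, Finset.sum_const_zero]
  -- Step B: split the summand using the cube weight formula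
  have stepB : ∑ l ∈ K, ∑ I : Finset (Fin s),
        (if l + EI s I ≤ c then ((-1 : ℤ) ^ I.card) * (M + 1 - cubeW s w0 l I) else 0)
      = (M + 1 + hcirc 0) * (∑ l ∈ K, ∑ I : Finset (Fin s),
          (if l + EI s I ≤ c then ((-1 : ℤ) ^ I.card) else 0))
        - (∑ l ∈ K, ∑ I : Finset (Fin s),
          (if l + EI s I ≤ c then ((-1 : ℤ) ^ I.card) * h (l + EI s I) else 0))
        - (∑ l ∈ K, ∑ I : Finset (Fin s),
          (if l + EI s I ≤ c then ((-1 : ℤ) ^ I.card) * hcirc l else 0)) := by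
    rw [Finset.mul_sum, ← Finset.sum_sub_distrib, ← Finset.sum_sub_distrib]
    refine Finset.sum_congr rfl ?_
    intro l hl
    rw [Finset.mul_sum, ← Finset.sum_sub_distrib, ← Finset.sum_sub_distrib]
    refine Finset.sum_congr rfl ?_
    intro I _
    by_cases hQ : l + EI s I ≤ c
    · simp only [if_pos hQ]
      rw [key l hl I hQ]
      ring
    · simp only [if_neg hQ]
      ring
  -- the three sums
  have S0 : (∑ l ∈ K, ∑ I : Finset (Fin s),
      (if l + EI s I ≤ c then ((-1 : ℤ) ^ I.card) else 0)) = 1 := by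
    have : ∀ l ∈ K, (∑ I : Finset (Fin s),
        (if l + EI s I ≤ c then ((-1 : ℤ) ^ I.card) else 0)) = if l = c then 1 else 0 := by
      intro l hl
      rw [hK, Finset.mem_Icc] at hl
      exact inner_alt l hl.2
    rw [Finset.sum_congr rfl this, Finset.sum_ite_eq' K c (fun _ => (1 : ℤ)),
      if_pos (by rw [hK, Finset.mem_Icc]; exact ⟨hc0, le_refl c⟩)]
  have SB : (∑ l ∈ K, ∑ I : Finset (Fin s),
      (if l + EI s I ≤ c then ((-1 : ℤ) ^ I.card) * hcirc l else 0)) = hcirc c := by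
    have hfac : ∀ l ∈ K, (∑ I : Finset (Fin s),
        (if l + EI s I ≤ c then ((-1 : ℤ) ^ I.card) * hcirc l else 0))
        = if l = c then hcirc l else 0 := by
      intro l hl
      rw [hK, Finset.mem_Icc] at hl
      have e1 : (∑ I : Finset (Fin s),
          (if l + EI s I ≤ c then ((-1 : ℤ) ^ I.card) * hcirc l else 0))
          = (∑ I : Finset (Fin s),
            (if l + EI s I ≤ c then ((-1 : ℤ) ^ I.card) else 0)) * hcirc l := by
        rw [Finset.sum_mul]
        exact Finset.sum_congr rfl (fun I _ => by split <;> simp)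
      rw [e1, inner_alt l hl.2]
      split <;> simp
    rw [Finset.sum_congr rfl hfac, Finset.sum_ite_eq' K c (fun l => hcirc l),
      if_pos (by rw [hK, Finset.mem_Icc]; exact ⟨hc0, le_refl c⟩)]
  have SC : (∑ l ∈ K, ∑ I : Finset (Fin s),
      (if l + EI s I ≤ c then ((-1 : ℤ) ^ I.card) * h (l + EI s I) else 0)) = 0 := by
    rw [hK, reindex h]
    have hfac : ∀ x ∈ Finset.Icc (0 : Fin s → ℤ) c, (∑ I : Finset (Fin s),
        (if EI s I ≤ x then ((-1 : ℤ) ^ I.card) * h x else 0))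
        = if x = 0 then h x else 0 := by
      intro x hx
      rw [Finset.mem_Icc] at hx
      have e1 : (∑ I : Finset (Fin s),
          (if EI s I ≤ x then ((-1 : ℤ) ^ I.card) * h x else 0))
          = (∑ I : Finset (Fin s),
            (if EI s I ≤ x then ((-1 : ℤ) ^ I.card) else 0)) * h x := by
        rw [Finset.sum_mul]
        exact Finset.sum_congr rfl (fun I _ => by split <;> simp)
      rw [e1, inner_alt2 x hx.1]
      split <;> simp
    rw [Finset.sum_congr rfl hfac,
      Finset.sum_ite_eq' (Finset.Icc (0 : Fin s → ℤ) c) 0 (fun x => h x),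
      if_pos (by rw [Finset.mem_Icc]; exact ⟨le_refl _, hc0⟩), hh0]
  -- the count of `n`'s
  have hcard : ((Finset.Icc m M).card : ℤ) = M + 1 - m := by
    rw [Int.card_Icc, Int.toNat_of_nonneg (by omega)]
  -- put things together
  have hsum : ∑ n ∈ Finset.Icc m M, (chiS s c w0 n - 1)
      = (∑ n ∈ Finset.Icc m M, chiS s c w0 n) - (M + 1 - m) := by
    rw [Finset.sum_sub_distrib, Finset.sum_const, ← hcard]
    simp
  rw [hEu, hsum, stepA, stepB, S0, SB, SC]
  ring
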